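/- Let R be a commutative ring, M an R-module, p ≥ 1 an integer, and s : ℤ → M a function. Suppose (i) for every n ∈ ℤ there exists a unit uₙ of R such that s(n) = uₙ·s(n−p), and (ii) for every n ∈ ℕ, s(−n) lies in the R-submodule spanned by {s(j) : 0 ≤ j ≤ n}. Then for every n ∈ ℤ, s(n) lies in the R-submodule of M spanned by {s(i) : 0 ≤ i ≤ ⌊p/2⌋}; in particular, the R-submodule spanned by {s(n) : n ∈ ℤ} equals the R-submodule spanned by {s(i) : 0 ≤ i ≤ ⌊p/2⌋}. -/
import Mathlib


/-- Abstract form of the spanning part of the main theorem: if `s n` equals `s (n-p)` up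
to an invertible coefficient, and negative-index values lie in the span of nonnegative
ones, then everything lies in the span of `{s i : 0 ≤ i ≤ ⌊p/2⌋}`. -/
theorem spanning_Bp (R M : Type*) [CommRing R] [AddCommGroup M] [Module R M]
    (p : ℕ) (hp : 1 ≤ p) (s : ℤ → M)
    (h1 : ∀ n : ℤ, ∃ u : Rˣ, s n = (u : R) • s (n - p))
    (h2 : ∀ n : ℕ, s (-(n : ℤ)) ∈ Submodule.span R {x | ∃ j : ℕ, j ≤ n ∧ x = s j}) :
    (∀ n : ℤ, s n ∈ Submodule.span R {x | ∃ i : ℕ, i ≤ p / 2 ∧ x = s i}) ∧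
      Submodule.span R (Set.range s) =
        Submodule.span R {x | ∃ i : ℕ, i ≤ p / 2 ∧ x = s i} := by
  set S := Submodule.span R {x | ∃ i : ℕ, i ≤ p / 2 ∧ x = s i} with hS
  have hmem : ∀ m : ℕ, m ≤ p / 2 → s m ∈ S := fun m hm =>
    Submodule.subset_span ⟨m, hm, rfl⟩
  have hnat : ∀ n : ℕ, s n ∈ S := by
    intro n
    induction n using Nat.strong_induction_on with
    | _ n ih =>
      by_cases h : n ≤ p / 2
      · exact hmem n h
      push_neg at h
      obtain ⟨u, hu⟩ := h1 n
      rw [hu]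
      apply Submodule.smul_mem
      by_cases hnp : p ≤ n
      · have heq : (n : ℤ) - p = ((n - p : ℕ) : ℤ) := by
          push_cast [hnp]; ring
        rw [heq]
        exact ih (n - p) (by omega)
      · push_neg at hnp
        have heq : (n : ℤ) - p = -((p - n : ℕ) : ℤ) := by
          push_cast [le_of_lt hnp]; ring
        rw [heq]
        have hle : p - n ≤ p / 2 := by omega
        refine Submodule.span_le.mpr ?_ (h2 (p - n))
        rintro x ⟨j, hj, rfl⟩
        exact hmem j (le_trans hj hle)
  have hall : ∀ n : ℤ, s n ∈ S := by
    intro n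
    rcases n with m | m
    · exact hnat m
    · have heq : (Int.negSucc m) = -((m + 1 : ℕ) : ℤ) := by
        simp [Int.negSucc_eq]
      rw [heq]
      refine Submodule.span_le.mpr ?_ (h2 (m + 1))
      rintro x ⟨j, _, rfl⟩
      exact hnat j
  refine ⟨hall, le_antisymm ?_ ?_⟩
  · rw [Submodule.span_le]
    rintro x ⟨n, rfl⟩
    exact hall n
  · apply Submodule.span_mono
    rintro x ⟨i, _, rfl⟩
    exact ⟨i, rfl⟩
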